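/- Let ω ∈ ℝ^n, let F¹_j ∈ C¹(𝕋^n) and R²_j be continuous bounded functions on 𝕋^n × [-ε₀,ε₀] (for j = 1,…,n), and let φ(t) solve φ̇_j = ω_j + ε F¹_j(φ) + ε² R²_j(φ, ε) with |ε| ≤ ε₀. Then for all T ≥ 0, φ_j(T) - φ_j(0) - ω_j T = ε ∫₀ᵀ F¹_j(φ(0) + ωt) dt + r_j(T,ε), where |r_j(T,ε)| ≤ A_j ε² T² + B_j ε² T with A_j = (1/2) ∑_{i=1}^n ‖∂_i F¹_j‖₀ ‖F¹_i + ε R²_i‖₀ and B_j = ‖R²_j‖₀. -/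

import Mathlib

/-!
Integrating the equation once, the drift `|φ_i(t) - φ_i(0) - ω_i t|` is at most
`|ε| ‖F¹_i + ε R²_i‖₀ t`. The remainder `r_j(t)` vanishes at `0` and has derivative
`ε (F¹_j(φ(t)) - F¹_j(φ(0) + ω t)) + ε² R²_j(φ(t), ε)`, which by the mean value inequality and the
drift bound is at most `ε² (2 A_j t + B_j)`; a function with such a derivative grows at most like
`A_j ε² T² + B_j ε² T`.
-/

open Finset

theorem abs_apply_le_sum_of_abs_apply_single_le {ι : Type*} [Fintype ι] [DecidableEq ι]
    (L : (ι → ℝ) →L[ℝ] ℝ) {c : ι → ℝ} (hc : ∀ i, |L (Pi.single i 1)| ≤ c i) (w : ι → ℝ) :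
    |L w| ≤ ∑ i, c i * |w i| := by
  conv_lhs => rw [pi_eq_sum_univ' w, map_sum]
  refine (abs_sum_le_sum_abs _ _).trans (sum_le_sum fun i _ => ?_)
  rw [map_smul, smul_eq_mul, abs_mul, mul_comm]
  exact mul_le_mul_of_nonneg_right (hc i) (abs_nonneg _)

theorem abs_sub_le_sum_of_abs_fderiv_single_le {ι : Type*} [Fintype ι] [DecidableEq ι]
    {f : (ι → ℝ) → ℝ} (hf : Differentiable ℝ f) {c : ι → ℝ}
    (hc : ∀ i x, |fderiv ℝ f x (Pi.single i 1)| ≤ c i) (x y : ι → ℝ) :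
    |f x - f y| ≤ ∑ i, c i * |x i - y i| := by
  have hseg : ∀ s ∈ Set.Icc (0 : ℝ) 1, HasDerivWithinAt (fun s : ℝ => f (y + s • (x - y)))
      (fderiv ℝ f (y + s • (x - y)) (x - y)) (Set.Icc 0 1) s := fun s _ =>
    ((hf _).hasFDerivAt.comp_hasDerivAt s
      (((hasDerivAt_id s).smul_const (x - y)).const_add y |>.congr_deriv (one_smul _ _)))
      |>.hasDerivWithinAt
  have := norm_image_sub_le_of_norm_deriv_le_segment' hseg
    (fun s _ => abs_apply_le_sum_of_abs_apply_single_le _ (hc · _) (x - y)) 1 (by simp)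
  simpa using this

theorem abs_le_of_abs_deriv_le_affine {r r' : ℝ → ℝ} {a b T : ℝ} (hT : 0 ≤ T) (hr0 : r 0 = 0)
    (hr : ∀ t ∈ Set.Icc 0 T, HasDerivAt r (r' t) t)
    (hr' : ∀ t ∈ Set.Icc 0 T, |r' t| ≤ a * t + b) :
    |r T| ≤ a / 2 * T ^ 2 + b * T := by
  have hB : ∀ t, HasDerivAt (fun t => a / 2 * t ^ 2 + b * t) (a * t + b) t := fun t => by
    refine (((hasDerivAt_pow 2 t).const_mul (a / 2)).add
      ((hasDerivAt_id t).const_mul b)).congr_deriv ?_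
    norm_num
    ring
  exact image_norm_le_of_norm_deriv_right_le_deriv_boundary
    (fun t ht => (hr t ht).continuousAt.continuousWithinAt)
    (fun t ht => (hr t (Set.Ico_subset_Icc_self ht)).hasDerivWithinAt) (by simp [hr0]) hB
    (fun t ht => hr' t (Set.Ico_subset_Icc_self ht)) ⟨hT, le_rfl⟩

theorem abs_sub_add_mul_le_of_hasDerivAt {x v : ℝ → ℝ} {w M t : ℝ} (ht : 0 ≤ t)
    (hx : ∀ s, HasDerivAt x (w + v s) s) (hv : ∀ s, |v s| ≤ M) :
    |x t - (x 0 + w * t)| ≤ M * t := by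
  have hr : ∀ s, HasDerivAt (fun s => x s - (x 0 + w * s)) (v s) s := fun s =>
    ((hx s).sub (((hasDerivAt_id s).const_mul w).const_add (x 0))).congr_deriv (by simp)
  simpa using abs_le_of_abs_deriv_le_affine (a := 0) ht (by simp) (fun s _ => hr s)
    (fun s _ => by simpa using hv s)

theorem stmt_9_general (n : ℕ) (ε₀ ε : ℝ) (hε : |ε| ≤ ε₀)
    (ω : Fin n → ℝ)
    (F1 : Fin n → (Fin n → ℝ) → ℝ)
    (R2 : Fin n → (Fin n → ℝ) → ℝ → ℝ)
    (hF1 : ∀ i, ContDiff ℝ 1 (F1 i))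
    (j : Fin n)
    (dF : Fin n → ℝ) (MR : Fin n → ℝ) (Bj : ℝ)
    -- `dF i` bounds `‖∂_i F¹_j‖₀`:
    (hdF : ∀ i x, |fderiv ℝ (F1 j) x (Pi.single i 1)| ≤ dF i) (hdF0 : ∀ i, 0 ≤ dF i)
    -- `MR i` bounds `‖F¹_i + ε R²_i‖₀`:
    (hMR : ∀ i x, |F1 i x + ε * R2 i x ε| ≤ MR i)
    -- `Bj` bounds `‖R²_j‖₀`:
    (hBj : ∀ x e, |e| ≤ ε₀ → |R2 j x e| ≤ Bj)
    (φ : ℝ → Fin n → ℝ)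
    (hφ : ∀ (i : Fin n) (t : ℝ),
      HasDerivAt (fun s => φ s i) (ω i + ε * F1 i (φ t) + ε ^ 2 * R2 i (φ t) ε) t) :
    ∀ T : ℝ, 0 ≤ T →
      |φ T j - φ 0 j - ω j * T
          - ε * ∫ t in (0:ℝ)..T, F1 j (fun i => φ 0 i + ω i * t)|
        ≤ ((1:ℝ)/2 * ∑ i, dF i * MR i) * ε ^ 2 * T ^ 2 + Bj * ε ^ 2 * T := by
  intro T hT
  set ψ : ℝ → Fin n → ℝ := fun t i => φ 0 i + ω i * t
  have hF1j : Differentiable ℝ (F1 j) := (hF1 j).differentiable one_ne_zero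
  have hdrift : ∀ i, ∀ t ≥ 0, |φ t i - ψ t i| ≤ |ε| * MR i * t := fun i t ht =>
    abs_sub_add_mul_le_of_hasDerivAt ht
      (fun s => (hφ i s).congr_deriv (by ring : _ = ω i + ε * (F1 i (φ s) + ε * R2 i (φ s) ε)))
      (fun s => (abs_mul _ _).trans_le (mul_le_mul_of_nonneg_left (hMR i _) (abs_nonneg ε)))
  have hremainder : ∀ t, HasDerivAt
      (fun T => φ T j - φ 0 j - ω j * T - ε * ∫ t in (0:ℝ)..T, F1 j (ψ t))
      (ε * (F1 j (φ t) - F1 j (ψ t)) + ε ^ 2 * R2 j (φ t) ε) t := fun t =>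
    ((((hφ j t).sub_const (φ 0 j)).sub ((hasDerivAt_id t).const_mul (ω j))).sub
      (((hF1j.continuous.comp (by fun_prop)).integral_hasStrictDerivAt 0 t).hasDerivAt.const_mul
        ε)).congr_deriv (by simp [ψ]; ring)
  have hbound : ∀ t ∈ Set.Icc 0 T,
      |ε * (F1 j (φ t) - F1 j (ψ t)) + ε ^ 2 * R2 j (φ t) ε|
        ≤ ε ^ 2 * (∑ i, dF i * MR i) * t + ε ^ 2 * Bj := by
    intro t ht
    have hF : |F1 j (φ t) - F1 j (ψ t)| ≤ |ε| * (∑ i, dF i * MR i) * t := by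
      refine (abs_sub_le_sum_of_abs_fderiv_single_le hF1j hdF _ _).trans ?_
      rw [mul_sum, sum_mul]
      refine sum_le_sum fun i _ => ?_
      exact (mul_le_mul_of_nonneg_left (hdrift i t ht.1) (hdF0 i)).trans_eq (by ring)
    calc _ ≤ |ε| * |F1 j (φ t) - F1 j (ψ t)| + ε ^ 2 * |R2 j (φ t) ε| :=
          (abs_add_le _ _).trans_eq (by rw [abs_mul, abs_mul, abs_pow, sq_abs])
      _ ≤ |ε| * (|ε| * (∑ i, dF i * MR i) * t) + ε ^ 2 * Bj := by
          gcongr; exact hBj _ _ hε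
      _ = _ := by rw [← sq_abs ε]; ring
  exact (abs_le_of_abs_deriv_le_affine hT (by simp) (fun t _ => hremainder t) hbound).trans_eq
    (by ring)

/-- Picard-type estimate (Lemma 4.1): a solution of
`φ̇_j = ω_j + ε F¹_j(φ) + ε² R²_j(φ, ε)` satisfies
`φ_j(T) - φ_j(0) - ω_j T = ε ∫₀ᵀ F¹_j(φ(0) + ωt) dt + r_j(T,ε)` with
`|r_j(T,ε)| ≤ A_j ε² T² + B_j ε² T`, where
`A_j = (1/2) ∑_i ‖∂_i F¹_j‖₀ ‖F¹_i + ε R²_i‖₀` and `B_j = ‖R²_j‖₀`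
(formulated with uniform bounds `dF i`, `MR i`, `Bj` for the respective sup norms). -/
theorem stmt_9 (n : ℕ) (ε₀ ε : ℝ) (hε : |ε| ≤ ε₀)
    (ω : Fin n → ℝ)
    (F1 : Fin n → (Fin n → ℝ) → ℝ)
    (R2 : Fin n → (Fin n → ℝ) → ℝ → ℝ)
    (hF1 : ∀ i, ContDiff ℝ 1 (F1 i))
    (hR2 : ∀ i, Continuous (fun p : (Fin n → ℝ) × ℝ => R2 i p.1 p.2))
    (j : Fin n)
    (dF : Fin n → ℝ) (MR : Fin n → ℝ) (Bj : ℝ)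
    -- `dF i` bounds `‖∂_i F¹_j‖₀`:
    (hdF : ∀ i x, |fderiv ℝ (F1 j) x (Pi.single i 1)| ≤ dF i) (hdF0 : ∀ i, 0 ≤ dF i)
    -- `MR i` bounds `‖F¹_i + ε R²_i‖₀`:
    (hMR : ∀ i x, |F1 i x + ε * R2 i x ε| ≤ MR i) (hMR0 : ∀ i, 0 ≤ MR i)
    -- `Bj` bounds `‖R²_j‖₀`:
    (hBj : ∀ x e, |e| ≤ ε₀ → |R2 j x e| ≤ Bj)
    (φ : ℝ → Fin n → ℝ)
    (hφ : ∀ (i : Fin n) (t : ℝ),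
      HasDerivAt (fun s => φ s i) (ω i + ε * F1 i (φ t) + ε ^ 2 * R2 i (φ t) ε) t) :
    ∀ T : ℝ, 0 ≤ T →
      |φ T j - φ 0 j - ω j * T
          - ε * ∫ t in (0:ℝ)..T, F1 j (fun i => φ 0 i + ω i * t)|
        ≤ ((1:ℝ)/2 * ∑ i, dF i * MR i) * ε ^ 2 * T ^ 2 + Bj * ε ^ 2 * T :=
  stmt_9_general n ε₀ ε hε ω F1 R2 hF1 j dF MR Bj hdF hdF0 hMR hBj φ hφ
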